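/- arXiv:1111.7246 — 8 statements merged into one kernel-verified Lean document; each statement's English description precedes it below -/
import Mathlib

section
/- Let Q be a connected Laplacian matrix on V = {0,…,n} with Laplacian lattice L_G. Then the packing radius of L_G under the simplicial distance function, Pac_△(L_G) = sup{R ≥ 0 : for all distinct q₁, q₂ ∈ L_G the sets {x ∈ H_0 : d_△(q₁,x) ≤ R} and {x ∈ H_0 : d_△(q₂,x) ≤ R} are disjoint}, equals MC₁(G)/(n+1), where MC₁(G) is the ℓ₁-minimum cut of the multigraph, i.e. the minimum over all nonempty proper subsets S ⊊ V of μ₁(S) = Σ_{i∈S, j∉S} b_{ij}. -/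
/-!
Two simplicial balls of radius `R` around `p₁, p₂ ∈ H₀` meet iff some `x ∈ H₀` dominates
`max(p₁, p₂) - R` coordinatewise, i.e. iff `(n+1) R ≥ ∑ᵢ max(p₁ᵢ, p₂ᵢ)`. For lattice points this sum
is `∑ᵢ (q₂ - q₁)ᵢ⁺`, because `L_G` lies in the root lattice; so the packing radius is the minimum of
`∑ᵢ vᵢ⁺` over nonzero `v ∈ L_G`, divided by `n+1`. Writing `v = ∑ cᵢ bᵢ`, the set `S` on which `c`
is maximal is a cut with `μ₁(S) ≤ ∑_{j∈S} v_j ≤ ∑ v⁺`. Conversely `u_S = ∑_{i∈S} bᵢ` satisfies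
`∑ u_S⁺ = μ₁(S)`, which is positive by connectivity, so `u_S ≠ 0`.
-/

open Finset

/-- A Laplacian matrix of a multigraph on vertex set `Fin (n+1)`:
symmetric, nonpositive off-diagonal entries, all row sums zero. -/
def IsLaplacian (n : ℕ) (Q : Matrix (Fin (n+1)) (Fin (n+1)) ℤ) : Prop :=
  (∀ i j, Q i j = Q j i) ∧ (∀ i j, i ≠ j → Q i j ≤ 0) ∧ (∀ i, ∑ j, Q i j = 0)

/-- A connected Laplacian matrix: the graph with an edge `{i,j}` whenever
`b_{ij} = -Q i j > 0` is connected. -/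
def IsConnectedLaplacian (n : ℕ) (Q : Matrix (Fin (n+1)) (Fin (n+1)) ℤ) : Prop :=
  IsLaplacian n Q ∧ (SimpleGraph.fromRel (fun i j => Q i j ≠ 0)).Connected

/-- The Laplacian lattice: the subgroup of `ℤ^{n+1}` generated by the rows of `Q`. -/
noncomputable def lapLattice (n : ℕ) (Q : Matrix (Fin (n+1)) (Fin (n+1)) ℤ) :
    AddSubgroup (Fin (n+1) → ℤ) :=
  AddSubgroup.closure (Set.range fun i => Q i)

/-- The hyperplane `H_0 = {x ∈ ℝ^{n+1} : ∑ x i = 0}`. -/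
def H0 (n : ℕ) : Set (Fin (n+1) → ℝ) := {x | ∑ i, x i = 0}

/-- The simplicial distance function on `H_0`: `d_△(p,q) = max_i (p i - q i)`. -/
noncomputable def simpDist (n : ℕ) (p q : Fin (n+1) → ℝ) : ℝ :=
  Finset.univ.sup' Finset.univ_nonempty fun i => p i - q i

/-- Coercion of an integer vector to a real vector. -/
noncomputable def intVec (n : ℕ) (q : Fin (n+1) → ℤ) : Fin (n+1) → ℝ := fun i => (q i : ℝ)

/-- The root lattice `A_n = {x ∈ ℤ^{n+1} : ∑ x i = 0}`. -/
def rootLattice (n : ℕ) : AddSubgroup (Fin (n+1) → ℤ) where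
  carrier := {x | ∑ i, x i = 0}
  add_mem' := by
    intro a b ha hb
    simp only [Set.mem_setOf_eq, Pi.add_apply, Finset.sum_add_distrib] at *
    omega
  zero_mem' := by simp
  neg_mem' := by
    intro a ha
    simp only [Set.mem_setOf_eq, Pi.neg_apply, Finset.sum_neg_distrib] at *
    omega

/-- The `i`-th row of `Q` as a real vector. -/
noncomputable def rowVec (n : ℕ) (Q : Matrix (Fin (n+1)) (Fin (n+1)) ℤ) (i : Fin (n+1)) :
    Fin (n+1) → ℝ := fun j => (Q i j : ℝ)

/-- `u^σ_k = b_{σ(0)} + ⋯ + b_{σ(k)}`. -/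
noncomputable def uPerm (n : ℕ) (Q : Matrix (Fin (n+1)) (Fin (n+1)) ℤ)
    (σ : Equiv.Perm (Fin (n+1))) (k : Fin (n+1)) : Fin (n+1) → ℝ :=
  ∑ j ∈ Finset.Iic k, rowVec n Q (σ j)

/-- The Delaunay polytope of the origin: the union over all permutations `σ`
of the simplices `△_σ = conv{u^σ_0, …, u^σ_n}`. -/
noncomputable def HDel (n : ℕ) (Q : Matrix (Fin (n+1)) (Fin (n+1)) ℤ) :
    Set (Fin (n+1) → ℝ) :=
  ⋃ σ : Equiv.Perm (Fin (n+1)), convexHull ℝ (Set.range (uPerm n Q σ))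

/-- `u_S = ∑_{i ∈ S} b_i`, as a real vector. -/
noncomputable def uCut (n : ℕ) (Q : Matrix (Fin (n+1)) (Fin (n+1)) ℤ)
    (S : Finset (Fin (n+1))) : Fin (n+1) → ℝ := ∑ i ∈ S, rowVec n Q i

lemma exists_sum_eq_zero_forall_le_iff {ι α : Type*} [Fintype ι] [Nonempty ι]
    [AddCommGroup α] [PartialOrder α] [IsOrderedAddMonoid α] (w : ι → α) :
    (∃ x : ι → α, ∑ i, x i = 0 ∧ ∀ i, w i ≤ x i) ↔ ∑ i, w i ≤ 0 := by
  constructor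
  · rintro ⟨x, hx, hwx⟩
    exact hx ▸ sum_le_sum fun i _ => hwx i
  · intro hw
    classical
    obtain ⟨i₀⟩ := ‹Nonempty ι›
    refine ⟨w - Pi.single i₀ (∑ i, w i), by simp [sum_sub_distrib], fun i => ?_⟩
    by_cases h : i = i₀
    · subst h; simpa using hw
    · simp [h]

lemma disjoint_simpBalls_iff {n : ℕ} (p₁ p₂ : Fin (n+1) → ℝ) (R : ℝ) :
    Disjoint {x | x ∈ H0 n ∧ simpDist n p₁ x ≤ R} {x | x ∈ H0 n ∧ simpDist n p₂ x ≤ R} ↔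
      (n+1 : ℝ) * R < ∑ i, max (p₁ i) (p₂ i) := by
  have mem_ball : ∀ p x, x ∈ {x | x ∈ H0 n ∧ simpDist n p x ≤ R} ↔
      ∑ i, x i = 0 ∧ ∀ i, p i - R ≤ x i := by
    intro p x
    simp only [Set.mem_ofPred_eq, H0, simpDist, sup'_le_iff, mem_univ, true_imp_iff, sub_le_comm]
  rw [← not_iff_not, Set.not_disjoint_iff, not_lt]
  calc (∃ x ∈ {x | x ∈ H0 n ∧ simpDist n p₁ x ≤ R}, x ∈ {x | x ∈ H0 n ∧ simpDist n p₂ x ≤ R})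
      ↔ ∃ x : Fin (n+1) → ℝ, ∑ i, x i = 0 ∧ ∀ i, max (p₁ i) (p₂ i) - R ≤ x i := by
        simp only [mem_ball]
        grind
    _ ↔ ∑ i, (max (p₁ i) (p₂ i) - R) ≤ 0 := exists_sum_eq_zero_forall_le_iff _
    _ ↔ ∑ i, max (p₁ i) (p₂ i) ≤ (n+1 : ℝ) * R := by
        simp [sum_sub_distrib]

def cutWeight {n : ℕ} (Q : Matrix (Fin (n+1)) (Fin (n+1)) ℤ) (S : Finset (Fin (n+1))) : ℤ :=
  ∑ i ∈ S, ∑ j ∈ Sᶜ, -Q i j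

lemma exists_min_cutWeight {n : ℕ} (hn : 1 ≤ n) (Q : Matrix (Fin (n+1)) (Fin (n+1)) ℤ) :
    ∃ S₀ : Finset (Fin (n+1)), S₀.Nonempty ∧ S₀ ≠ univ ∧
      ∀ S : Finset (Fin (n+1)), S.Nonempty → S ≠ univ → cutWeight Q S₀ ≤ cutWeight Q S := by
  have : Nontrivial (Fin (n+1)) := Fin.nontrivial_iff_two_le.2 (by omega)
  obtain ⟨S₀, hS₀, hmin⟩ := (univ.filter fun S : Finset (Fin (n+1)) => S.Nonempty ∧ S ≠ univ)
    |>.exists_min_image (cutWeight Q) ⟨{0}, by simp⟩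
  simp only [mem_filter, mem_univ, true_and, and_imp] at hS₀ hmin
  exact ⟨S₀, hS₀.1, hS₀.2, hmin⟩

section Laplacian

open scoped Matrix

variable {n : ℕ} {Q : Matrix (Fin (n+1)) (Fin (n+1)) ℤ}

lemma mem_lapLattice_iff {v : Fin (n+1) → ℤ} : v ∈ lapLattice n Q ↔ ∃ c, c ᵥ* Q = v := by
  rw [lapLattice, ← Submodule.span_int_eq_addSubgroupClosure, Submodule.mem_toAddSubgroup,
    Submodule.mem_span_range_iff_exists_fun]
  simp only [Matrix.vecMul_eq_sum]

lemma sum_rows_mem_lapLattice (S : Finset (Fin (n+1))) : ∑ i ∈ S, Q i ∈ lapLattice n Q :=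
  sum_mem fun i _ => AddSubgroup.subset_closure ⟨i, rfl⟩

namespace IsLaplacian

variable (hQ : IsLaplacian n Q)
include hQ

lemma lapLattice_le_rootLattice : lapLattice n Q ≤ rootLattice n :=
  (AddSubgroup.closure_le _).2 <| by rintro _ ⟨i, rfl⟩; exact hQ.2.2 i

lemma sum_col (j : Fin (n+1)) : ∑ i, Q i j = 0 := by
  simpa only [hQ.1 _ j] using hQ.2.2 j

lemma neg_nonneg_of_ne {i j : Fin (n+1)} (hij : i ≠ j) : 0 ≤ -Q i j :=
  neg_nonneg.2 (hQ.2.1 i j hij)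

lemma cutWeight_eq_sum_col (S : Finset (Fin (n+1))) :
    cutWeight Q S = ∑ j ∈ S, ∑ i ∈ Sᶜ, -Q i j := by
  simp only [cutWeight, hQ.1 _ _]

lemma vecMul_apply (c : Fin (n+1) → ℤ) (j : Fin (n+1)) :
    (c ᵥ* Q) j = ∑ i, (c j - c i) * -Q i j := by
  have hsplit : ∑ i, (c j - c i) * -Q i j = -(c j * ∑ i, Q i j) + ∑ i, c i * Q i j := by
    rw [mul_sum, ← sum_neg_distrib, ← sum_add_distrib]
    exact sum_congr rfl fun i _ => by ring
  rw [hsplit, hQ.sum_col, Matrix.vecMul, dotProduct]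
  ring

lemma sum_max_eq_sum_posPart_sub {q₁ : Fin (n+1) → ℤ} (hq₁ : q₁ ∈ lapLattice n Q)
    (q₂ : Fin (n+1) → ℤ) : ∑ i, max (q₁ i) (q₂ i) = ∑ i, ((q₂ - q₁) i)⁺ := by
  have hsum : ∑ i, q₁ i = 0 := hQ.lapLattice_le_rootLattice hq₁
  calc ∑ i, max (q₁ i) (q₂ i) = ∑ i, q₁ i + ∑ i, ((q₂ - q₁) i)⁺ := by
        rw [← sum_add_distrib]
        refine sum_congr rfl fun i _ => ?_
        rw [posPart_def, Pi.sub_apply]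
        omega
    _ = ∑ i, ((q₂ - q₁) i)⁺ := by rw [hsum, zero_add]

lemma disjoint_balls_iff {q₁ : Fin (n+1) → ℤ} (hq₁ : q₁ ∈ lapLattice n Q)
    (q₂ : Fin (n+1) → ℤ) (R : ℝ) :
    Disjoint {x | x ∈ H0 n ∧ simpDist n (intVec n q₁) x ≤ R}
        {x | x ∈ H0 n ∧ simpDist n (intVec n q₂) x ≤ R} ↔
      (n+1 : ℝ) * R < ((∑ i, ((q₂ - q₁) i)⁺ : ℤ) : ℝ) := by
  rw [disjoint_simpBalls_iff, ← hQ.sum_max_eq_sum_posPart_sub hq₁]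
  simp [intVec]

lemma exists_cut_le_sum_posPart {c : Fin (n+1) → ℤ} (hc : c ᵥ* Q ≠ 0) :
    ∃ S : Finset (Fin (n+1)), S.Nonempty ∧ S ≠ univ ∧
      cutWeight Q S ≤ ∑ j, ((c ᵥ* Q) j)⁺ := by
  set M := univ.sup' univ_nonempty c
  set S := univ.filter fun i => c i = M
  have hmem : ∀ i, i ∈ S ↔ c i = M := fun i => by simp [S]
  have hle : ∀ i, c i ≤ M := fun i => le_sup' c (mem_univ i)
  have hSne : S.Nonempty := by
    obtain ⟨i, -, hi⟩ := exists_mem_eq_sup' univ_nonempty c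
    exact ⟨i, (hmem i).2 hi.symm⟩
  have hSuniv : S ≠ univ := by
    intro h
    have hconst : ∀ i, c i = M := fun i => (hmem i).1 (h ▸ mem_univ i)
    exact hc (funext fun j => by simp [hQ.vecMul_apply, hconst])
  -- an edge leaving the level set `S` of the maximum of `c` is weighted by `c j - c i ≥ 1`
  have hcol : ∀ j ∈ S, ∑ i ∈ Sᶜ, -Q i j ≤ (c ᵥ* Q) j := by
    intro j hj
    have hcj : c j = M := (hmem j).1 hj
    rw [hQ.vecMul_apply]
    calc ∑ i ∈ Sᶜ, -Q i j ≤ ∑ i ∈ Sᶜ, (c j - c i) * -Q i j := by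
          refine sum_le_sum fun i hi => ?_
          have hci : c i ≠ M := fun h => mem_compl.1 hi ((hmem i).2 h)
          have hgap : 1 ≤ c j - c i := by have := hle i; omega
          have hw := hQ.neg_nonneg_of_ne (ne_of_mem_of_not_mem hj (mem_compl.1 hi)).symm
          nlinarith
      _ ≤ ∑ i, (c j - c i) * -Q i j := by
          refine sum_le_sum_of_subset_of_nonneg (subset_univ _) fun i _ hi => ?_
          have hci : c i = M := (hmem i).1 (by simpa using hi)
          rw [hci, hcj, sub_self, zero_mul]
  refine ⟨S, hSne, hSuniv, ?_⟩
  calc cutWeight Q S = ∑ j ∈ S, ∑ i ∈ Sᶜ, -Q i j := hQ.cutWeight_eq_sum_col S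
    _ ≤ ∑ j ∈ S, (c ᵥ* Q) j := sum_le_sum hcol
    _ ≤ ∑ j ∈ S, ((c ᵥ* Q) j)⁺ := sum_le_sum fun j _ => le_posPart _
    _ ≤ ∑ j, ((c ᵥ* Q) j)⁺ :=
        sum_le_sum_of_subset_of_nonneg (subset_univ _) fun j _ _ => posPart_nonneg _

lemma sum_posPart_sum_rows (S : Finset (Fin (n+1))) :
    ∑ j, ((∑ i ∈ S, Q i) j)⁺ = cutWeight Q S := by
  have happ : ∀ j, (∑ i ∈ S, Q i) j = ∑ i ∈ S, Q i j := fun j => Finset.sum_apply _ _ _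
  have hin : ∀ j ∈ S, (∑ i ∈ S, Q i) j = ∑ i ∈ Sᶜ, -Q i j := by
    intro j _
    rw [happ, sum_neg_distrib, eq_neg_iff_add_eq_zero, sum_add_sum_compl]
    exact hQ.sum_col j
  have hout : ∀ j ∈ Sᶜ, (∑ i ∈ S, Q i) j ≤ 0 := fun j hj => by
    rw [happ]
    exact sum_nonpos fun i hi => hQ.2.1 i j (ne_of_mem_of_not_mem hi (mem_compl.1 hj))
  rw [← sum_add_sum_compl S, sum_eq_zero fun j hj => posPart_eq_zero.2 (hout j hj), add_zero,
    hQ.cutWeight_eq_sum_col]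
  refine sum_congr rfl fun j hj => ?_
  rw [hin j hj, posPart_eq_self]
  exact sum_nonneg fun i hi => hQ.neg_nonneg_of_ne (ne_of_mem_of_not_mem hj (mem_compl.1 hi)).symm

end IsLaplacian

namespace IsConnectedLaplacian

variable (hQ : IsConnectedLaplacian n Q)
include hQ

lemma cutWeight_pos {S : Finset (Fin (n+1))} (hS : S.Nonempty) (hS' : S ≠ univ) :
    0 < cutWeight Q S := by
  obtain ⟨a, ha⟩ := hS
  obtain ⟨b, -, hb⟩ := exists_of_ssubset (ssubset_univ_iff.2 hS')
  obtain ⟨w⟩ := hQ.2.preconnected a b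
  obtain ⟨d, -, hd₁, hd₂⟩ := w.exists_boundary_dart (S : Set (Fin (n+1))) ha hb
  obtain ⟨hne, hQd⟩ := (SimpleGraph.fromRel_adj _ _ _).1 d.adj
  have hneg : Q d.fst d.snd < 0 :=
    (hQ.1.2.1 _ _ hne).lt_of_ne (hQd.elim id fun h => hQ.1.1 _ _ ▸ h)
  have hnonneg : ∀ i ∈ S, ∀ j ∈ Sᶜ, 0 ≤ -Q i j := fun i hi j hj =>
    hQ.1.neg_nonneg_of_ne (ne_of_mem_of_not_mem hi (mem_compl.1 hj))
  calc 0 < -Q d.fst d.snd := neg_pos.2 hneg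
    _ ≤ ∑ j ∈ Sᶜ, -Q d.fst j := single_le_sum (hnonneg _ hd₁) (mem_compl.2 hd₂)
    _ ≤ cutWeight Q S := single_le_sum (f := fun i => ∑ j ∈ Sᶜ, -Q i j)
        (fun i hi => sum_nonneg (hnonneg i hi)) hd₁

lemma packingRadii_eq_Ico {S₀ : Finset (Fin (n+1))} (hS₀ : S₀.Nonempty) (hS₀' : S₀ ≠ univ)
    (hmin : ∀ S : Finset (Fin (n+1)), S.Nonempty → S ≠ univ → cutWeight Q S₀ ≤ cutWeight Q S) :
    {R : ℝ | 0 ≤ R ∧ ∀ q₁ ∈ lapLattice n Q, ∀ q₂ ∈ lapLattice n Q, q₁ ≠ q₂ →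
        Disjoint {x | x ∈ H0 n ∧ simpDist n (intVec n q₁) x ≤ R}
                 {x | x ∈ H0 n ∧ simpDist n (intVec n q₂) x ≤ R}} =
      Set.Ico 0 ((cutWeight Q S₀ : ℝ) / (n + 1)) := by
  ext R
  simp only [Set.mem_ofPred_eq, Set.mem_Ico, and_congr_right_iff]
  intro _
  rw [lt_div_iff₀ (by positivity), mul_comm]
  constructor
  · intro hdisj
    have hu : ∑ i ∈ S₀, Q i ≠ 0 := by
      intro h
      have := hQ.1.sum_posPart_sum_rows S₀
      rw [h] at this
      simp only [Pi.zero_apply, posPart_zero, sum_const_zero] at this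
      exact (hQ.cutWeight_pos hS₀ hS₀').ne this
    have := hdisj 0 (zero_mem _) _ (sum_rows_mem_lapLattice S₀) hu.symm
    rwa [hQ.1.disjoint_balls_iff (zero_mem _), sub_zero, hQ.1.sum_posPart_sum_rows] at this
  · intro hR q₁ hq₁ q₂ hq₂ hne
    rw [hQ.1.disjoint_balls_iff hq₁]
    obtain ⟨c, hc⟩ := mem_lapLattice_iff.1 (sub_mem hq₂ hq₁)
    obtain ⟨S, hS, hS', hle⟩ := hQ.1.exists_cut_le_sum_posPart (hc ▸ sub_ne_zero.2 hne.symm)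
    rw [hc] at hle
    exact hR.trans_le (by exact_mod_cast (hmin S hS hS').trans hle)

end IsConnectedLaplacian

end Laplacian

/-- the packing radius of the Laplacian lattice of a connected
multigraph under the simplicial distance function equals `MC₁(G)/(n+1)`,
where `MC₁(G)` is the ℓ₁-minimum cut. -/
theorem packing_radius_eq_min_cut_over_n_plus_one (n : ℕ) (hn : 1 ≤ n)
    (Q : Matrix (Fin (n+1)) (Fin (n+1)) ℤ) (hQ : IsConnectedLaplacian n Q) :
    sSup {R : ℝ | 0 ≤ R ∧ ∀ q₁ ∈ lapLattice n Q, ∀ q₂ ∈ lapLattice n Q, q₁ ≠ q₂ →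
        Disjoint {x | x ∈ H0 n ∧ simpDist n (intVec n q₁) x ≤ R}
                 {x | x ∈ H0 n ∧ simpDist n (intVec n q₂) x ≤ R}} =
      (sInf {c : ℝ | ∃ S : Finset (Fin (n+1)), S.Nonempty ∧ S ≠ Finset.univ ∧
          c = ∑ i ∈ S, ∑ j ∈ Sᶜ, -(Q i j : ℝ)}) / (n + 1) := by
  obtain ⟨S₀, hS₀, hS₀', hmin⟩ := exists_min_cutWeight hn Q
  have hcast : ∀ S : Finset (Fin (n+1)), ∑ i ∈ S, ∑ j ∈ Sᶜ, -(Q i j : ℝ) = cutWeight Q S :=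
    fun S => by push_cast [cutWeight]; rfl
  rw [hQ.packingRadii_eq_Ico hS₀ hS₀' hmin,
    csSup_Ico (div_pos (by exact_mod_cast hQ.cutWeight_pos hS₀ hS₀') (by positivity))]
  congr 1
  symm
  refine IsLeast.csInf_eq ⟨⟨S₀, hS₀, hS₀', (hcast S₀).symm⟩, ?_⟩
  rintro _ ⟨S, hS, hS', rfl⟩
  rw [hcast]
  exact_mod_cast hmin S hS hS'
end

section
/- Let p ∈ H_0, let p⊕0 ∈ ℝ^{n+1} denote the coordinatewise maximum of p and the origin, i.e. (p⊕0)_i = max(p_i, 0), and let m be the orthogonal projection of p⊕0 onto H_0, i.e. m = p⊕0 − (‖p⊕0‖₁/(n+1))·(1,…,1) where ‖p⊕0‖₁ = Σ_i max(p_i,0). Then d_△(0,m) = d_△(p,m) = ‖p⊕0‖₁/(n+1), and for every m' ∈ H_0 one has max(d_△(0,m'), d_△(p,m')) ≥ ‖p⊕0‖₁/(n+1); that is, m is the △-midpoint of p and the origin and the △-midpoint radius equals ‖p⊕0‖₁/(n+1). -/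
open Finset

/-!
Write `c = ‖p ⊕ 0‖₁/(n+1)` and `R = max (d_△(0,m'), d_△(p,m'))`. Both `0 - m'` and `p - m'` are
coordinatewise at most `R`, so `p ⊕ 0 ≤ m' + R`; summing over the `n+1` coordinates and using
`∑ m' = 0` gives `(n+1) R ≥ ‖p ⊕ 0‖₁`. Conversely, for `m = p ⊕ 0 - c` the differences `0 - m` and
`p - m` are at most `c`, with equality at a coordinate where `p i ≤ 0`, resp. `p i ≥ 0`; both kinds
of coordinates exist because `∑ p = 0`.
-/

variable {n : ℕ} {p q : Fin (n+1) → ℝ} {R : ℝ}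

theorem sub_le_simpDist (p q : Fin (n+1) → ℝ) (i : Fin (n+1)) : p i - q i ≤ simpDist n p q :=
  le_sup' (fun i => p i - q i) (mem_univ i)

theorem simpDist_le_iff : simpDist n p q ≤ R ↔ ∀ i, p i - q i ≤ R := by
  simp [simpDist, sup'_le_iff]

theorem simpDist_eq_of_forall_le (hle : ∀ i, p i - q i ≤ R) (i : Fin (n+1))
    (hi : p i - q i = R) : simpDist n p q = R :=
  le_antisymm (simpDist_le_iff.2 hle) (hi ▸ sub_le_simpDist p q i)

theorem simpDist_zero_max_zero_sub (c : ℝ) {i : Fin (n+1)} (hi : p i ≤ 0) :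
    simpDist n 0 (fun j => max (p j) 0 - c) = c :=
  simpDist_eq_of_forall_le (fun j => by simp) i (by simp [max_eq_right hi])

theorem simpDist_max_zero_sub (c : ℝ) {i : Fin (n+1)} (hi : 0 ≤ p i) :
    simpDist n p (fun j => max (p j) 0 - c) = c :=
  simpDist_eq_of_forall_le (fun j => by simp) i (by simp [max_eq_left hi])

theorem exists_nonpos_of_mem_H0 (hp : p ∈ H0 n) : ∃ i, p i ≤ 0 := by
  obtain ⟨i, -, hi⟩ := exists_le_of_sum_le (g := fun _ => (0 : ℝ)) univ_nonempty
    (by simpa using hp.le)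
  exact ⟨i, hi⟩

theorem exists_nonneg_of_mem_H0 (hp : p ∈ H0 n) : ∃ i, 0 ≤ p i := by
  obtain ⟨i, -, hi⟩ := exists_le_of_sum_le (f := fun _ => (0 : ℝ)) univ_nonempty
    (by simpa using hp.ge)
  exact ⟨i, hi⟩

theorem sum_max_zero_le_of_mem_H0 {m : Fin (n+1) → ℝ} (hm : m ∈ H0 n) :
    ∑ j, max (p j) 0 ≤ (n + 1) * max (simpDist n 0 m) (simpDist n p m) := by
  set R := max (simpDist n 0 m) (simpDist n p m)
  have h₀ : ∀ j, -m j ≤ R := fun j =>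
    le_trans (by simpa using sub_le_simpDist 0 m j) (le_max_left _ _)
  have hpm : ∀ j, p j - m j ≤ R := fun j => (sub_le_simpDist p m j).trans (le_max_right _ _)
  calc ∑ j, max (p j) 0 ≤ ∑ j, (m j + R) :=
        sum_le_sum fun j _ => max_le (by linarith [hpm j]) (by linarith [h₀ j])
    _ = (n + 1) * R := by simp [sum_add_distrib, show ∑ j, m j = 0 from hm]

theorem trop_midpoint_general (n : ℕ) (p : Fin (n+1) → ℝ) (hp : p ∈ H0 n) :
    simpDist n 0 (fun i => max (p i) 0 - (∑ j, max (p j) 0) / (n + 1)) =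
        (∑ j, max (p j) 0) / (n + 1) ∧
    simpDist n p (fun i => max (p i) 0 - (∑ j, max (p j) 0) / (n + 1)) =
        (∑ j, max (p j) 0) / (n + 1) ∧
    ∀ m' ∈ H0 n, (∑ j, max (p j) 0) / (n + 1) ≤
        max (simpDist n 0 m') (simpDist n p m') := by
  obtain ⟨i₀, hi₀⟩ := exists_nonpos_of_mem_H0 hp
  obtain ⟨i₁, hi₁⟩ := exists_nonneg_of_mem_H0 hp
  refine ⟨simpDist_zero_max_zero_sub _ hi₀, simpDist_max_zero_sub _ hi₁, fun m' hm' => ?_⟩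
  rw [div_le_iff₀ (by positivity), mul_comm]
  exact sum_max_zero_le_of_mem_H0 hm'

/-- for `p ∈ H_0`, the projection `m` of the coordinatewise maximum
`p ⊕ 0` onto `H_0` is the `△`-midpoint of `p` and the origin, and the
`△`-midpoint radius is `‖p ⊕ 0‖₁/(n+1)`. -/
theorem trop_midpoint (n : ℕ) (hn : 1 ≤ n) (p : Fin (n+1) → ℝ) (hp : p ∈ H0 n) :
    simpDist n 0 (fun i => max (p i) 0 - (∑ j, max (p j) 0) / (n + 1)) =
        (∑ j, max (p j) 0) / (n + 1) ∧
    simpDist n p (fun i => max (p i) 0 - (∑ j, max (p j) 0) / (n + 1)) =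
        (∑ j, max (p j) 0) / (n + 1) ∧
    ∀ m' ∈ H0 n, (∑ j, max (p j) 0) / (n + 1) ≤
        max (simpDist n 0 m') (simpDist n p m') :=
  trop_midpoint_general n p hp
end

section
/- Let P be a compact convex subset of ℝ^n containing the origin in its interior, let d_P(p,q) = inf{λ ≥ 0 : q ∈ p + λ·P}, and let L be a full-rank lattice in ℝ^n (the set of integer linear combinations of some ℝ-basis of ℝ^n). If q ∈ L \ {0} is a shortest vector of L under d_P, i.e. d_P(0,q) ≤ d_P(0,q') for all q' ∈ L \ {0}, then the Voronoi cells V_P(0) and V_P(q) have a common point; that is, every shortest vector of L under d_P is a Voronoi neighbour of the origin. -/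
/-!
With `g` the gauge of `P`, `a = g q` and `b = g (-q)`, the point `p = (a / (a + b)) • q` of the
segment `[0, q]` is at the same gauge distance `a b / (a + b)` from `0` and from `q`. For any
lattice point `s ≠ 0`, minimality of `q` and subadditivity of `g` give
`g (s - p) ≥ g s - g p ≥ a - g p = g (q - p)`, so `p` lies in both Voronoi cells.
-/

/-- The polyhedral distance function induced by a convex body `P` containing
the origin: `d_P(p,q) = inf {λ ≥ 0 : q ∈ p + λ • P}`. -/
noncomputable def polyDist (n : ℕ) (P : Set (Fin n → ℝ)) (p q : Fin n → ℝ) : ℝ :=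
  sInf {l : ℝ | 0 ≤ l ∧ ∃ y ∈ P, q = p + l • y}

lemma polyDist_eq_gauge {n : ℕ} {P : Set (Fin n → ℝ)} (h0 : (0 : Fin n → ℝ) ∈ P)
    (p q : Fin n → ℝ) : polyDist n P p q = gauge P (q - p) := by
  rcases eq_or_ne q p with rfl | hne
  · have hzero : (0 : ℝ) ∈ {l : ℝ | 0 ≤ l ∧ ∃ y ∈ P, q = q + l • y} := ⟨le_rfl, 0, h0, by simp⟩
    rw [sub_self, gauge_zero]
    exact le_antisymm (csInf_le ⟨0, fun _ hl => hl.1⟩ hzero) (le_csInf ⟨0, hzero⟩ fun _ hl => hl.1)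
  · rw [polyDist, gauge_def]
    congr 1
    ext l
    constructor
    · rintro ⟨hl, y, hy, rfl⟩
      -- `l = 0` would force `q = p`
      refine ⟨hl.lt_of_ne ?_, y, hy, by simp⟩
      rintro rfl
      simp at hne
    · rintro ⟨hl, y, hy, hly⟩
      exact ⟨hl.out.le, y, hy, by simp only at hly; rw [hly, add_sub_cancel]⟩

section Gauge

variable {E : Type*} [AddCommGroup E] [Module ℝ E] {P : Set E}

theorem exists_gauge_bisector (hconv : Convex ℝ P) (habs : Absorbent ℝ P) (q : E) :
    ∃ p : E, gauge P (-p) = gauge P (q - p) ∧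
      ∀ s : E, gauge P q ≤ gauge P s → gauge P (q - p) ≤ gauge P (s - p) := by
  set a := gauge P q
  set b := gauge P (-q)
  have ha : 0 ≤ a := gauge_nonneg q
  have hb : 0 ≤ b := gauge_nonneg (-q)
  set t := a / (a + b)
  have ht : 0 ≤ t := by positivity
  have ht' : 0 ≤ 1 - t :=
    sub_nonneg.mpr (div_le_one_of_le₀ (le_add_of_nonneg_right hb) (by positivity))
  have hbalance : t * b = (1 - t) * a := by
    rcases (add_nonneg ha hb).eq_or_lt with hab | hab
    · obtain ⟨ha0, hb0⟩ : a = 0 ∧ b = 0 := ⟨by linarith, by linarith⟩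
      simp [ha0, hb0]
    · simp only [t]
      field_simp
      ring
  have hp : gauge P (t • q) = t * a := by rw [gauge_smul_of_nonneg ht, smul_eq_mul]
  have hneg : gauge P (-(t • q)) = t * b := by
    rw [← smul_neg, gauge_smul_of_nonneg ht, smul_eq_mul]
  have hsub : gauge P (q - t • q) = (1 - t) * a := by
    rw [show q - t • q = (1 - t) • q by rw [sub_smul, one_smul], gauge_smul_of_nonneg ht',
      smul_eq_mul]
  refine ⟨t • q, by rw [hneg, hsub, hbalance], fun s hs => ?_⟩
  have htri : gauge P s ≤ gauge P (s - t • q) + gauge P (t • q) := by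
    simpa using gauge_add_le hconv habs (s - t • q) (t • q)
  rw [hsub]
  linarith

end Gauge

theorem shortest_vector_is_voronoi_neighbour_general (n : ℕ) (P : Set (Fin n → ℝ))
    (hPconv : Convex ℝ P)
    (hP0 : (0 : Fin n → ℝ) ∈ interior P)
    (L : AddSubgroup (Fin n → ℝ))
    (q : Fin n → ℝ)
    (hshort : ∀ q' ∈ L, q' ≠ 0 → polyDist n P 0 q ≤ polyDist n P 0 q') :
    ({p | ∀ s' ∈ L, polyDist n P p 0 ≤ polyDist n P p s'} ∩
      {p | ∀ s' ∈ L, polyDist n P p q ≤ polyDist n P p s'}).Nonempty := by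
  have h0P : (0 : Fin n → ℝ) ∈ P := interior_subset hP0
  have habs : Absorbent ℝ P := absorbent_nhds_zero (mem_interior_iff_mem_nhds.mp hP0)
  obtain ⟨p, hequi, hfar⟩ := exists_gauge_bisector hPconv habs q
  have hcell : ∀ s' ∈ L, gauge P (q - p) ≤ gauge P (s' - p) := by
    intro s' hs'
    rcases eq_or_ne s' 0 with rfl | hs0
    · rw [zero_sub, hequi]
    · apply hfar
      simpa [polyDist_eq_gauge h0P] using hshort s' hs' hs0
  refine ⟨p, fun s' hs' => ?_, fun s' hs' => ?_⟩ <;>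
    simpa only [polyDist_eq_gauge h0P, zero_sub, hequi] using hcell s' hs'

/-- every shortest vector of a full-rank lattice under a polyhedral
distance function is a Voronoi neighbour of the origin. -/
theorem shortest_vector_is_voronoi_neighbour (n : ℕ) (P : Set (Fin n → ℝ))
    (hPcomp : IsCompact P) (hPconv : Convex ℝ P)
    (hP0 : (0 : Fin n → ℝ) ∈ interior P)
    (L : AddSubgroup (Fin n → ℝ))
    (hL : ∃ B : Module.Basis (Fin n) ℝ (Fin n → ℝ), L = AddSubgroup.closure (Set.range B))
    (q : Fin n → ℝ) (hqL : q ∈ L) (hq0 : q ≠ 0)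
    (hshort : ∀ q' ∈ L, q' ≠ 0 → polyDist n P 0 q ≤ polyDist n P 0 q') :
    ({p | ∀ s' ∈ L, polyDist n P p 0 ≤ polyDist n P p s'} ∩
      {p | ∀ s' ∈ L, polyDist n P p q ≤ polyDist n P p s'}).Nonempty :=
  shortest_vector_is_voronoi_neighbour_general n P hPconv hP0 L q hshort
end

section
/- Let Q(G₁) and Q(G₂) be connected Laplacian matrices on the same vertex set V = {0,…,n}. Then H_{Del_{G₁}}(O) = H_{Del_{G₂}}(O) if and only if Q(G₁) = Q(G₂); in other words, the Delaunay polytope of the origin determines the Laplacian matrix uniquely. -/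
open Finset

/-!
The support function of `HDel n Q` in the direction `∑ m ∈ T, x m` is the weight
`∑ k ∈ T, ∑ m ∈ T, Q k m` of the cut `(T, Tᶜ)`. Indeed `HDel n Q` lies in the convex hull of the
cut vectors `u_S`, contains every `u_S` with `S` nonempty, and the sign pattern of a Laplacian
makes `u_T` maximise this functional among them. Taking `T = {i}` recovers the diagonal of `Q`,
and `T = {i, j}` then recovers `Q i j + Q j i = 2 Q i j`.
-/

section

variable {n : ℕ} {Q : Matrix (Fin (n+1)) (Fin (n+1)) ℤ}

lemma uPerm_eq_uCut_image (σ : Equiv.Perm (Fin (n+1))) (k : Fin (n+1)) :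
    uPerm n Q σ k = uCut n Q ((Iic k).image σ) := by
  rw [uPerm, uCut, sum_image fun a _ b _ h => σ.injective h]

lemma HDel_subset_convexHull_range_uCut :
    HDel n Q ⊆ convexHull ℝ (Set.range (uCut n Q)) :=
  Set.iUnion_subset fun σ => convexHull_mono <| by
    rintro _ ⟨k, rfl⟩
    exact ⟨_, (uPerm_eq_uCut_image σ k).symm⟩

lemma exists_perm_image_Iic_eq {S : Finset (Fin (n+1))} (hS : S.Nonempty) :
    ∃ (σ : Equiv.Perm (Fin (n+1))) (k : Fin (n+1)), (Iic k).image σ = S := by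
  classical
  have hS_card : #S ≤ n + 1 := (card_le_univ S).trans (by simp)
  let k : Fin (n+1) := ⟨#S - 1, by omega⟩
  have hk_card : #(Iic k) = #S := by
    rw [Fin.card_Iic]
    have := hS.card_pos
    simp only [k]
    omega
  let σ := (Finset.equivOfCardEq hk_card).extendSubtype
  refine ⟨σ, k, eq_of_subset_of_card_le ?_ ?_⟩
  · intro y hy
    obtain ⟨x, hx, rfl⟩ := mem_image.mp hy
    exact Equiv.extendSubtype_mem _ x hx
  · rw [card_image_of_injective _ σ.injective, hk_card]

lemma uCut_mem_HDel {S : Finset (Fin (n+1))} (hS : S.Nonempty) : uCut n Q S ∈ HDel n Q := by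
  obtain ⟨σ, k, hσk⟩ := exists_perm_image_Iic_eq hS
  refine Set.mem_iUnion.mpr ⟨σ, subset_convexHull ℝ _ ⟨k, ?_⟩⟩
  rw [uPerm_eq_uCut_image, hσk]

lemma isGreatest_image_HDel (f : (Fin (n+1) → ℝ) →ₗ[ℝ] ℝ) {T : Finset (Fin (n+1))}
    (hT : T.Nonempty) (hmax : ∀ S, f (uCut n Q S) ≤ f (uCut n Q T)) :
    IsGreatest (f '' HDel n Q) (f (uCut n Q T)) := by
  refine ⟨⟨_, uCut_mem_HDel hT, rfl⟩, ?_⟩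
  rintro _ ⟨x, hx, rfl⟩
  have hhull : convexHull ℝ (Set.range (uCut n Q)) ⊆ {y | f y ≤ f (uCut n Q T)} :=
    convexHull_min (by rintro _ ⟨S, rfl⟩; exact hmax S)
      (convex_halfSpace_le f.isLinear _)
  exact hhull (HDel_subset_convexHull_range_uCut hx)

lemma sum_uCut_apply (S T : Finset (Fin (n+1))) :
    ∑ m ∈ T, uCut n Q S m = ((∑ k ∈ S, ∑ m ∈ T, Q k m : ℤ) : ℝ) := by
  simp only [uCut, rowVec, Finset.sum_apply, Int.cast_sum]
  exact sum_comm

namespace IsLaplacian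

lemma sum_row_nonpos_of_notMem (hQ : IsLaplacian n Q) {k : Fin (n+1)} {T : Finset (Fin (n+1))}
    (hk : k ∉ T) : ∑ m ∈ T, Q k m ≤ 0 :=
  sum_nonpos fun m hm => hQ.2.1 k m (ne_of_mem_of_not_mem hm hk).symm

lemma sum_row_nonneg_of_mem (hQ : IsLaplacian n Q) {k : Fin (n+1)} {T : Finset (Fin (n+1))}
    (hk : k ∈ T) : 0 ≤ ∑ m ∈ T, Q k m := by
  have hsplit := sum_add_sum_compl T (Q k)
  have hcompl := hQ.sum_row_nonpos_of_notMem (T := Tᶜ) (notMem_compl.mpr hk)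
  have hrow := hQ.2.2 k
  omega

lemma sum_sum_le_sum_sum (hQ : IsLaplacian n Q) (S T : Finset (Fin (n+1))) :
    ∑ k ∈ S, ∑ m ∈ T, Q k m ≤ ∑ k ∈ T, ∑ m ∈ T, Q k m := by
  classical
  calc ∑ k ∈ S, ∑ m ∈ T, Q k m
      ≤ ∑ k ∈ S.filter (· ∈ T), ∑ m ∈ T, Q k m := by
        rw [← sum_filter_add_sum_filter_not S (· ∈ T)]
        have : ∑ k ∈ S.filter (· ∉ T), ∑ m ∈ T, Q k m ≤ 0 :=
          sum_nonpos fun k hk => hQ.sum_row_nonpos_of_notMem (mem_filter.mp hk).2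
        linarith
    _ ≤ ∑ k ∈ T, ∑ m ∈ T, Q k m :=
        sum_le_sum_of_subset_of_nonneg (fun k hk => (mem_filter.mp hk).2)
          fun k hk _ => hQ.sum_row_nonneg_of_mem hk

lemma isGreatest_sum_image_HDel (hQ : IsLaplacian n Q) {T : Finset (Fin (n+1))}
    (hT : T.Nonempty) :
    IsGreatest ((fun x => ∑ m ∈ T, x m) '' HDel n Q) ((∑ k ∈ T, ∑ m ∈ T, Q k m : ℤ) : ℝ) := by
  let f : (Fin (n+1) → ℝ) →ₗ[ℝ] ℝ := ∑ m ∈ T, LinearMap.proj m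
  have hf : ⇑f = fun x => ∑ m ∈ T, x m := funext fun x => by simp [f, LinearMap.sum_apply]
  have h := isGreatest_image_HDel f hT fun S => by
    simp only [hf, sum_uCut_apply]
    exact_mod_cast hQ.sum_sum_le_sum_sum S T
  simpa only [hf, sum_uCut_apply] using h

end IsLaplacian

lemma sum_sum_eq_of_HDel_eq {Q₁ Q₂ : Matrix (Fin (n+1)) (Fin (n+1)) ℤ}
    (h₁ : IsLaplacian n Q₁) (h₂ : IsLaplacian n Q₂) (hEq : HDel n Q₁ = HDel n Q₂)
    {T : Finset (Fin (n+1))} (hT : T.Nonempty) :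
    ∑ k ∈ T, ∑ m ∈ T, Q₁ k m = ∑ k ∈ T, ∑ m ∈ T, Q₂ k m := by
  have h := (h₁.isGreatest_sum_image_HDel hT).unique
    (hEq ▸ h₂.isGreatest_sum_image_HDel hT)
  exact_mod_cast h

end

theorem delaunay_polytope_determines_laplacian_general (n : ℕ)
    (Q₁ Q₂ : Matrix (Fin (n+1)) (Fin (n+1)) ℤ)
    (h₁ : IsConnectedLaplacian n Q₁) (h₂ : IsConnectedLaplacian n Q₂) :
    HDel n Q₁ = HDel n Q₂ ↔ Q₁ = Q₂ := by
  refine ⟨fun hEq => ?_, fun h => h ▸ rfl⟩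
  have hcut {T : Finset (Fin (n+1))} (hT : T.Nonempty) := sum_sum_eq_of_HDel_eq h₁.1 h₂.1 hEq hT
  have hdiag (i : Fin (n+1)) : Q₁ i i = Q₂ i i := by
    simpa using hcut (singleton_nonempty i)
  ext i j
  rcases eq_or_ne i j with rfl | hij
  · exact hdiag i
  · have hpair := hcut (insert_nonempty i {j})
    simp only [sum_pair hij] at hpair
    have := h₁.1.1 i j
    have := h₂.1.1 i j
    have := hdiag i
    have := hdiag j
    omega

/-- the Delaunay polytope of the origin determines the Laplacian
matrix of a connected multigraph uniquely. -/
theorem delaunay_polytope_determines_laplacian (n : ℕ) (hn : 1 ≤ n)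
    (Q₁ Q₂ : Matrix (Fin (n+1)) (Fin (n+1)) ℤ)
    (h₁ : IsConnectedLaplacian n Q₁) (h₂ : IsConnectedLaplacian n Q₂) :
    HDel n Q₁ = HDel n Q₂ ↔ Q₁ = Q₂ :=
  delaunay_polytope_determines_laplacian_general n Q₁ Q₂ h₁ h₂
end

section
/- Let Q be a connected Laplacian matrix on V = {0,…,n}. For every nonempty proper subset S ⊊ V, the point u_S = Σ_{i∈S} b_i is an extreme point of the polytope H'(G) = conv{u_T : ∅ ≠ T ⊆ V}; in fact there exists a linear functional f on ℝ^{n+1} such that f(u_S) > f(u_T) for every nonempty subset T ⊆ V with T ≠ S. -/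
open Finset

/-!
A functional `x ↦ c ⬝ᵥ x` takes the value `∑_{i ∈ T} (Q c)_i` at `u_T`. By the maximum principle the kernel of a connected Laplacian
consists of the constant vectors, so its range is the whole sum-zero hyperplane and `Q c` can be
any sum-zero vector `y`; choosing `y` positive on `S` and negative off `S` makes `∑_{i ∈ T} y_i`
strictly maximal at `T = S`. A point at which a linear functional is strictly maximal on a set
is an extreme point of its convex hull.
-/

open Matrix

namespace LinearMap

variable {𝕜 E : Type*} [Field 𝕜] [LinearOrder 𝕜] [IsStrictOrderedRing 𝕜] [AddCommGroup E]
  [Module 𝕜 E]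

theorem lt_of_mem_convexHull_of_ne (f : E →ₗ[𝕜] 𝕜) {s : Set E} {x z : E}
    (hx : x ∈ s) (hlt : ∀ y ∈ s, y ≠ x → f y < f x) (hz : z ∈ convexHull 𝕜 s) (hzx : z ≠ x) :
    f z < f x := by
  have hrest : convexHull 𝕜 (s \ {x}) ⊆ {w | f w < f x} :=
    convexHull_min (fun y hy => hlt y hy.1 hy.2) (convex_halfSpace_lt f.isLinear _)
  rcases (s \ {x}).eq_empty_or_nonempty with hempty | hne
  · rw [Set.sdiff_eq_empty] at hempty
    exact absurd (by simpa using convexHull_mono hempty hz) hzx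
  · rw [← Set.insert_sdiff_self_of_mem hx, convexHull_insert hne, convexJoin_singleton_left,
      Set.mem_iUnion₂] at hz
    obtain ⟨w, hw, a, b, ha, hb, hab, rfl⟩ := hz
    have hb : 0 < b := by
      refine hb.lt_of_ne fun hb0 => hzx ?_
      simp [← hb0, show a = 1 by linarith]
    calc f (a • x + b • w) = a * f x + b * f w := by simp
      _ < a * f x + b * f x := by gcongr; exact hrest hw
      _ = f x := by rw [← add_mul, hab, one_mul]

theorem mem_extremePoints_convexHull_of_forall_lt (f : E →ₗ[𝕜] 𝕜) {s : Set E} {x : E}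
    (hx : x ∈ s) (hlt : ∀ y ∈ s, y ≠ x → f y < f x) :
    x ∈ (convexHull 𝕜 s).extremePoints 𝕜 := by
  rw [(convex_convexHull 𝕜 s).mem_extremePoints_iff_convex_sdiff]
  refine ⟨subset_convexHull 𝕜 s hx, ?_⟩
  have : convexHull 𝕜 s \ {x} = convexHull 𝕜 s ∩ {w | f w < f x} := by
    ext z
    exact ⟨fun hz => ⟨hz.1, f.lt_of_mem_convexHull_of_ne hx hlt hz.1 hz.2⟩,
      fun hz => ⟨hz.1, fun hzx => (ne_of_lt hz.2) (congrArg f hzx)⟩⟩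
  rw [this]
  exact (convex_convexHull 𝕜 s).inter (convex_halfSpace_lt f.isLinear (f x))

end LinearMap

namespace Finset

theorem sum_lt_sum_of_pos_of_neg {ι : Type*} [DecidableEq ι] {y : ι → ℝ} {S T : Finset ι}
    (hpos : ∀ i ∈ S, 0 < y i) (hneg : ∀ i ∉ S, y i < 0) (hTS : T ≠ S) :
    ∑ i ∈ T, y i < ∑ i ∈ S, y i := by
  rw [← sum_inter_add_sum_sdiff T S, ← sum_inter_add_sum_sdiff S T, inter_comm]
  have hout : ∑ i ∈ T \ S, y i ≤ 0 := sum_nonpos fun i hi => (hneg i (mem_sdiff.1 hi).2).le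
  have hin : 0 ≤ ∑ i ∈ S \ T, y i := sum_nonneg fun i hi => (hpos i (mem_sdiff.1 hi).1).le
  rcases (T \ S).eq_empty_or_nonempty with hTS' | hTS'
  · have hST : (S \ T).Nonempty :=
      sdiff_nonempty.2 fun hST => hTS (subset_antisymm (sdiff_eq_empty_iff_subset.1 hTS') hST)
    have := sum_pos (fun i hi => hpos i (mem_sdiff.1 hi).1) hST
    linarith
  · have := sum_neg (fun i hi => hneg i (mem_sdiff.1 hi).2) hTS'
    linarith

theorem exists_pos_neg_sum_eq_zero {ι : Type*} [Fintype ι] [DecidableEq ι] {S : Finset ι}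
    (hS : S.Nonempty) (hS' : S ≠ univ) :
    ∃ y : ι → ℝ, (∀ i ∈ S, 0 < y i) ∧ (∀ i ∉ S, y i < 0) ∧ ∑ i, y i = 0 := by
  refine ⟨fun i => if i ∈ S then (#Sᶜ : ℝ) else -(#S : ℝ), fun i hi => ?_, fun i hi => ?_, ?_⟩
  · simpa [hi, card_pos, nonempty_iff_ne_empty] using hS'
  · simpa [hi, card_pos] using hS
  · simp [sum_ite, filter_notMem_eq_sdiff, compl_eq_univ_sdiff]
    ring

end Finset

namespace Matrix

variable {ι : Type*} [Fintype ι] {A : Matrix ι ι ℝ}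

theorem apply_eq_of_mulVec_apply_eq_zero_of_forall_le (hoff : ∀ i j, i ≠ j → A i j ≤ 0)
    (hrow : ∀ i, ∑ j, A i j = 0) {x : ι → ℝ} {i j : ι} (hAx : (A *ᵥ x) i = 0)
    (hi : ∀ k, x k ≤ x i) (hij : A i j ≠ 0) : x j = x i := by
  have hterm : ∀ k, 0 ≤ -A i k * (x i - x k) := fun k => by
    rcases eq_or_ne i k with rfl | hik
    · simp
    · exact mul_nonneg (neg_nonneg.2 (hoff i k hik)) (sub_nonneg.2 (hi k))
  have hsum : ∑ k, -A i k * (x i - x k) = 0 := by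
    calc ∑ k, -A i k * (x i - x k) = (A *ᵥ x) i - (∑ k, A i k) * x i := by
          simp only [mulVec, dotProduct, sum_mul, ← sum_sub_distrib]
          exact sum_congr rfl fun k _ => by ring
      _ = 0 := by rw [hAx, hrow i]; ring
  have hj := (sum_eq_zero_iff_of_nonneg fun k _ => hterm k).1 hsum j (mem_univ j)
  rcases mul_eq_zero.1 hj with h | h
  · exact absurd (neg_eq_zero.1 h) hij
  · linarith

theorem apply_eq_apply_of_mulVec_eq_zero (hsymm : A.IsSymm) (hoff : ∀ i j, i ≠ j → A i j ≤ 0)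
    (hrow : ∀ i, ∑ j, A i j = 0) (hconn : (SimpleGraph.fromRel fun i j => A i j ≠ 0).Preconnected)
    {x : ι → ℝ} (hx : A *ᵥ x = 0) (i j : ι) : x i = x j := by
  have : Nonempty ι := ⟨i⟩
  obtain ⟨m, hm⟩ := Finite.exists_max x
  have hwalk : ∀ {u v} (p : (SimpleGraph.fromRel fun i j => A i j ≠ 0).Walk u v),
      (∀ k, x k ≤ x u) → x v = x u := by
    intro u v p
    induction p with
    | nil => exact fun _ => rfl
    | @cons u w v huw p ih =>
      intro hu
      have huw' : A u w ≠ 0 := by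
        obtain ⟨-, h | h⟩ := SimpleGraph.fromRel_adj _ _ _ |>.1 huw
        · exact h
        · rwa [hsymm.apply]
      have hwu := apply_eq_of_mulVec_apply_eq_zero_of_forall_le hoff hrow (congrFun hx u) hu huw'
      rw [ih (hwu ▸ hu), hwu]
  obtain ⟨p⟩ := hconn m i
  obtain ⟨q⟩ := hconn m j
  rw [hwalk p hm, hwalk q hm]

theorem exists_mulVec_eq_of_sum_eq_zero (hcol : ∀ j, ∑ i, A i j = 0)
    (hker : ∀ x, A *ᵥ x = 0 → ∀ i j, x i = x j) {y : ι → ℝ} (hy : ∑ i, y i = 0) :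
    ∃ x, A *ᵥ x = y := by
  rcases isEmpty_or_nonempty ι with hι | hι
  · exact ⟨0, Subsingleton.elim _ _⟩
  have hsumA : ∀ x, ∑ i, (A *ᵥ x) i = 0 := fun x => by
    simp only [mulVec, dotProduct]
    rw [sum_comm]
    simp [← sum_mul, hcol]
  set J : Matrix ι ι ℝ := of fun _ _ => 1
  have hJ : ∀ x, J *ᵥ x = fun _ => ∑ i, x i := fun x => by
    ext; simp [J, mulVec, dotProduct]
  have hsum : ∀ x, ∑ i, ((A + J) *ᵥ x) i = Fintype.card ι * ∑ i, x i := fun x => by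
    simp [add_mulVec, sum_add_distrib, hsumA, hJ]
  have hsum_eq_zero : ∀ x, ∑ i, ((A + J) *ᵥ x) i = 0 → ∑ i, x i = 0 := fun x hx => by
    rw [hsum, mul_eq_zero] at hx
    exact hx.resolve_left (by simp)
  have hAJ : ∀ x, ∑ i, x i = 0 → (A + J) *ᵥ x = A *ᵥ x := fun x hx => by
    simp only [add_mulVec, hJ, hx, add_eq_left]
    rfl
  -- `A + J` multiplies coordinate sums by `card ι` and agrees with `A` on the sum-zero
  -- hyperplane, whence it is injective, hence surjective.
  have hinj : Function.Injective (A + J).mulVecLin := by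
    rw [← LinearMap.ker_eq_bot, LinearMap.ker_eq_bot']
    intro x hx
    rw [mulVecLin_apply] at hx
    have hx0 : ∑ i, x i = 0 := hsum_eq_zero x (by simp [hx])
    have hconst := hker x (by rw [← hAJ x hx0, hx])
    funext i
    have : Fintype.card ι * x i = 0 := by
      rw [← hx0, sum_congr rfl fun j _ => hconst j i]
      simp
    simpa using this
  obtain ⟨x, hx⟩ := LinearMap.injective_iff_surjective.1 hinj y
  rw [mulVecLin_apply] at hx
  exact ⟨x, by rw [← hAJ x (hsum_eq_zero x (by rw [hx, hy])), hx]⟩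

end Matrix

theorem IsConnectedLaplacian.exists_mulVec_eq {n : ℕ} {Q : Matrix (Fin (n+1)) (Fin (n+1)) ℤ}
    (hQ : IsConnectedLaplacian n Q) {y : Fin (n+1) → ℝ} (hy : ∑ i, y i = 0) :
    ∃ c, Q.map ((↑) : ℤ → ℝ) *ᵥ c = y := by
  obtain ⟨⟨hsymm, hoff, hrow⟩, hconn⟩ := hQ
  have hsymmR : (Q.map ((↑) : ℤ → ℝ)).IsSymm := IsSymm.ext fun i j => by simp [hsymm]
  have hrowR : ∀ i, ∑ j, Q.map ((↑) : ℤ → ℝ) i j = 0 := fun i => by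
    simp [← Int.cast_sum, hrow]
  have hker : ∀ x, Q.map ((↑) : ℤ → ℝ) *ᵥ x = 0 → ∀ i j, x i = x j := fun x =>
    apply_eq_apply_of_mulVec_eq_zero hsymmR (fun i j hij => by simpa using hoff i j hij) hrowR
      (by simpa using hconn.preconnected)
  refine exists_mulVec_eq_of_sum_eq_zero (fun j => ?_) hker hy
  rw [← hrowR j]
  exact sum_congr rfl fun i _ => hsymmR.apply j i

theorem uS_is_vertex_general (n : ℕ)
    (Q : Matrix (Fin (n+1)) (Fin (n+1)) ℤ) (hQ : IsConnectedLaplacian n Q)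
    (S : Finset (Fin (n+1))) (hS1 : S.Nonempty) (hS2 : S ≠ Finset.univ) :
    uCut n Q S ∈ Set.extremePoints ℝ (convexHull ℝ
        {x | ∃ T : Finset (Fin (n+1)), T.Nonempty ∧ x = uCut n Q T}) ∧
    ∃ f : (Fin (n+1) → ℝ) →ₗ[ℝ] ℝ, ∀ T : Finset (Fin (n+1)), T.Nonempty → T ≠ S →
        f (uCut n Q T) < f (uCut n Q S) := by
  obtain ⟨y, hpos, hneg, hy⟩ := exists_pos_neg_sum_eq_zero hS1 hS2
  obtain ⟨c, hc⟩ := hQ.exists_mulVec_eq hy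
  let f := dotProductBilin ℝ ℝ c
  have hf : ∀ T, f (uCut n Q T) = ∑ i ∈ T, y i := fun T => by
    rw [← hc]
    simp only [f, dotProductBilin_apply_apply, uCut, dotProduct_sum]
    exact sum_congr rfl fun i _ => dotProduct_comm _ _
  have hlt : ∀ T, T ≠ S → f (uCut n Q T) < f (uCut n Q S) := fun T hTS => by
    rw [hf, hf]
    exact sum_lt_sum_of_pos_of_neg hpos hneg hTS
  refine ⟨f.mem_extremePoints_convexHull_of_forall_lt ⟨S, hS1, rfl⟩ ?_, f, fun T _ => hlt T⟩
  rintro _ ⟨T, -, rfl⟩ hTS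
  exact hlt T fun h => hTS (h ▸ rfl)

/-- for every nonempty proper `S ⊊ V`, the point `u_S` is an
extreme point of `H'(G) = conv{u_T : ∅ ≠ T ⊆ V}`; in fact some linear functional
is strictly maximized at `u_S` among all the points `u_T`. -/
theorem uS_is_vertex (n : ℕ) (hn : 1 ≤ n)
    (Q : Matrix (Fin (n+1)) (Fin (n+1)) ℤ) (hQ : IsConnectedLaplacian n Q)
    (S : Finset (Fin (n+1))) (hS1 : S.Nonempty) (hS2 : S ≠ Finset.univ) :
    uCut n Q S ∈ Set.extremePoints ℝ (convexHull ℝ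
        {x | ∃ T : Finset (Fin (n+1)), T.Nonempty ∧ x = uCut n Q T}) ∧
    ∃ f : (Fin (n+1) → ℝ) →ₗ[ℝ] ℝ, ∀ T : Finset (Fin (n+1)), T.Nonempty → T ≠ S →
        f (uCut n Q T) < f (uCut n Q S) :=
  uS_is_vertex_general n Q hQ S hS1 hS2
end

section
/- Let Q be a connected Laplacian matrix on V = {0,…,n}. Then H'(G) = H_{Del_G}(O); that is, the convex hull of the points {u_S : ∅ ≠ S ⊆ V} equals the union of the simplices △_σ over all permutations σ of V. In particular, the Delaunay polytope of the origin H_{Del_G}(O) is a convex set. -/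
open Finset

lemma tele_Ico (f : ℕ → ℝ) (a b : ℕ) (hab : a ≤ b) :
    ∑ m ∈ Finset.Ico a b, (f m - f (m+1)) = f a - f b := by
  rw [Finset.sum_Ico_eq_sum_range]
  have h := Finset.sum_range_sub' (fun i => f (a+i)) (b-a)
  simp only [Nat.add_zero] at h
  rw [Nat.add_sub_cancel' hab] at h
  rw [← h]
  apply Finset.sum_congr rfl
  intro i _
  ring_nf

lemma sum_Ici_fin {N : ℕ} (f : ℕ → ℝ) (j : Fin (N+1)) :
    ∑ k ∈ Finset.Ici j, f k.val = ∑ m ∈ Finset.Ico (j : ℕ) (N+1), f m := by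
  refine Finset.sum_nbij' (i := fun (k : Fin (N+1)) => (k : ℕ))
    (j := fun m => (⟨min m N, by omega⟩ : Fin (N+1))) ?_ ?_ ?_ ?_ ?_
  · intro a ha
    have h1 : j ≤ a := Finset.mem_Ici.mp ha
    exact Finset.mem_Ico.mpr ⟨Fin.le_def.mp h1, a.isLt⟩
  · intro m hm
    have := Finset.mem_Ico.mp hm
    simp only [Finset.mem_Ici, Fin.le_def]
    simp; omega
  · intro a _; ext; simp; omega
  · intro m hm; have := Finset.mem_Ico.mp hm; simp; omega
  · intro a _; rfl


/-- `H'(G) = H_{Del_G}(O)`: the convex hull of the points `u_S`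
over nonempty `S ⊆ V` equals the union of the simplices `△_σ`; in particular the
Delaunay polytope of the origin is convex. -/
theorem convex_hull_eq_union_simplices (n : ℕ) (hn : 1 ≤ n)
    (Q : Matrix (Fin (n+1)) (Fin (n+1)) ℤ) (hQ : IsConnectedLaplacian n Q) :
    convexHull ℝ {x | ∃ S : Finset (Fin (n+1)), S.Nonempty ∧ x = uCut n Q S} =
        HDel n Q ∧
    Convex ℝ (HDel n Q) := by
  classical
  set B : Fin (n+1) → (Fin (n+1) → ℝ) := rowVec n Q with hBdef
  have hBsum : ∑ v, B v = 0 := by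
    funext j
    simp only [Finset.sum_apply, hBdef, rowVec, Pi.zero_apply]
    have h1 : ∀ v ∈ Finset.univ, ((Q v j : ℝ)) = ((Q j v : ℝ)) := by
      intro v _; rw [hQ.1.1 v j]
    rw [Finset.sum_congr rfl h1, ← Int.cast_sum, hQ.1.2.2 j, Int.cast_zero]
  -- Key: any [0,1]-combination of rows lies in HDel
  have key : ∀ y : Fin (n+1) → ℝ, (∀ v, 0 ≤ y v) → (∀ v, y v ≤ 1) →
      (∑ v, y v • B v) ∈ HDel n Q := by
    intro y h0 h1
    set M : ℝ := Finset.univ.sup' Finset.univ_nonempty y with hMdef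
    have hMle1 : M ≤ 1 := Finset.sup'_le _ _ (fun v _ => h1 v)
    set y' : Fin (n+1) → ℝ := fun v => y v + (1 - M) with hy'def
    have h0' : ∀ v, 0 ≤ y' v := by
      intro v; have := h0 v; simp only [hy'def]; linarith
    have h1' : ∀ v, y' v ≤ 1 := by
      intro v
      have : y v ≤ M := Finset.le_sup' y (Finset.mem_univ v)
      simp only [hy'def]; linarith
    have hmax : ∃ v0, y' v0 = 1 := by
      obtain ⟨v, _, hv⟩ := Finset.exists_mem_eq_sup' Finset.univ_nonempty y
      exact ⟨v, by simp only [hy'def]; rw [← hMdef] at hv; rw [← hv]; ring⟩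
    have hTeq : ∑ v, y' v • B v = ∑ v, y v • B v := by
      simp only [hy'def, add_smul, Finset.sum_add_distrib]
      rw [← Finset.smul_sum, hBsum, smul_zero, add_zero]
    set σ : Equiv.Perm (Fin (n+1)) := Fin.revPerm.trans (Tuple.sort y') with hσdef
    have hσ : ∀ a b : Fin (n+1), a ≤ b → y' (σ b) ≤ y' (σ a) := by
      intro a b hab
      have h1 : (Fin.rev b) ≤ (Fin.rev a) := Fin.rev_le_rev.mpr hab
      have := Tuple.monotone_sort y' h1
      simpa [hσdef, Function.comp] using this
    set g : Fin (n+1) → ℝ := fun k => y' (σ k) with hgdef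
    have hg0 : g 0 = 1 := by
      refine le_antisymm (h1' _) ?_
      obtain ⟨v0, hv0⟩ := hmax
      have h2 : y' (σ (σ.symm v0)) ≤ y' (σ 0) := hσ 0 (σ.symm v0) (Fin.zero_le _)
      rw [Equiv.apply_symm_apply, hv0] at h2
      exact h2
    set G : ℕ → ℝ := fun m => if h : m < n+1 then g ⟨m, h⟩ else 0 with hGdef
    have hGval : ∀ k : Fin (n+1), G k.val = g k := by
      intro k; simp only [hGdef, dif_pos k.isLt, Fin.eta]
    set w' : Fin (n+1) → ℝ := fun k => G k.val - G (k.val + 1) with hw'def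
    have hw'0 : ∀ k, 0 ≤ w' k := by
      intro k
      simp only [hw'def]
      by_cases h : k.val + 1 < n+1
      · have h2 : G (k.val + 1) = g ⟨k.val + 1, h⟩ := by simp only [hGdef, dif_pos h]
        rw [h2, hGval k, sub_nonneg]
        exact hσ k ⟨k.val + 1, h⟩ (by simp [Fin.le_def])
      · have h2 : G (k.val + 1) = 0 := by simp only [hGdef, dif_neg h]
        rw [h2, hGval k, sub_zero]
        exact h0' _
    have hIci : ∀ j : Fin (n+1), ∑ k ∈ Finset.Ici j, w' k = g j := by
      intro j
      have h1 : ∑ k ∈ Finset.Ici j, w' k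
          = ∑ k ∈ Finset.Ici j, (fun m => G m - G (m+1)) k.val := rfl
      rw [h1, sum_Ici_fin (fun m => G m - G (m+1)) j,
        tele_Ico G j.val (n+1) (le_of_lt j.isLt)]
      have h2 : G (n+1) = 0 := by simp [hGdef]
      rw [h2, hGval j, sub_zero]
    have hw'sum : ∑ k, w' k = 1 := by
      have h1 : Finset.Ici (0 : Fin (n+1)) = Finset.univ := by
        ext k; simp [Fin.zero_le]
      rw [← h1, hIci 0, hg0]
    have hfin : ∑ v, y' v • B v = ∑ k, w' k • uPerm n Q σ k := by
      calc ∑ v, y' v • B v = ∑ j, y' (σ j) • B (σ j) :=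
            (Equiv.sum_comp σ (fun v => y' v • B v)).symm
        _ = ∑ j, (∑ k ∈ Finset.Ici j, w' k) • B (σ j) := by
            refine Finset.sum_congr rfl fun j _ => ?_
            rw [hIci j]
        _ = ∑ j, ∑ k ∈ Finset.Ici j, w' k • B (σ j) := by
            refine Finset.sum_congr rfl fun j _ => ?_
            rw [Finset.sum_smul]
        _ = ∑ j, ∑ k, (if j ≤ k then w' k • B (σ j) else 0) := by
            refine Finset.sum_congr rfl fun j _ => ?_
            rw [← Finset.univ_inter (Finset.Ici j), ← Finset.sum_ite_mem]
            exact Finset.sum_congr rfl fun k _ => by simp [Finset.mem_Ici]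
        _ = ∑ k, ∑ j, (if j ≤ k then w' k • B (σ j) else 0) := Finset.sum_comm
        _ = ∑ k, ∑ j ∈ Finset.Iic k, w' k • B (σ j) := by
            refine Finset.sum_congr rfl fun k _ => ?_
            rw [← Finset.univ_inter (Finset.Iic k), ← Finset.sum_ite_mem]
            exact Finset.sum_congr rfl fun j _ => by simp [Finset.mem_Iic]
        _ = ∑ k, w' k • uPerm n Q σ k := by
            refine Finset.sum_congr rfl fun k _ => ?_
            rw [uPerm, Finset.smul_sum]
    rw [← hTeq, hfin]
    refine Set.mem_iUnion.mpr ⟨σ, ?_⟩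
    have hmem := Finset.centerMass_mem_convexHull (t := Finset.univ) (w := w')
      (z := uPerm n Q σ) (fun k _ => hw'0 k) (by rw [hw'sum]; norm_num)
      (fun k _ => Set.mem_range_self k)
    rwa [Finset.centerMass_eq_of_sum_1 _ _ hw'sum] at hmem
  have hmain : convexHull ℝ {x | ∃ S : Finset (Fin (n+1)), S.Nonempty ∧ x = uCut n Q S}
      = HDel n Q := by
    apply Set.Subset.antisymm
    · intro x hx
      rw [_root_.convexHull_eq] at hx
      obtain ⟨ι, t, w, z, hw0, hw1, hz, hcm⟩ := hx
      set S : ι → Finset (Fin (n+1)) := fun i =>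
        if h : ∃ S', S'.Nonempty ∧ z i = uCut n Q S' then h.choose else ∅ with hSdef
      have hzS : ∀ i ∈ t, z i = uCut n Q (S i) := by
        intro i hi
        have h := hz i hi
        simp only [Set.mem_setOf_eq] at h
        simp only [hSdef, dif_pos h]
        exact h.choose_spec.2
      set y : Fin (n+1) → ℝ := fun v => ∑ i ∈ t, w i * (if v ∈ S i then 1 else 0)
        with hydef
      have h0 : ∀ v, 0 ≤ y v := by
        intro v
        refine Finset.sum_nonneg fun i hi => mul_nonneg (hw0 i hi) ?_
        split <;> norm_num
      have h1 : ∀ v, y v ≤ 1 := by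
        intro v
        rw [← hw1]
        refine Finset.sum_le_sum fun i hi => ?_
        split
        · rw [mul_one]
        · rw [mul_zero]; exact hw0 i hi
      have hTy : ∑ v, y v • B v = x := by
        calc ∑ v, y v • B v
            = ∑ v, ∑ i ∈ t, (w i * (if v ∈ S i then 1 else 0)) • B v := by
              refine Finset.sum_congr rfl fun v _ => ?_
              rw [hydef]; rw [Finset.sum_smul]
          _ = ∑ i ∈ t, ∑ v, (w i * (if v ∈ S i then 1 else 0)) • B v :=
              Finset.sum_comm
          _ = ∑ i ∈ t, w i • uCut n Q (S i) := by
              refine Finset.sum_congr rfl fun i _ => ?_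
              have h2 : ∀ v ∈ Finset.univ,
                  (w i * (if v ∈ S i then 1 else 0)) • B v
                    = if v ∈ S i then w i • B v else 0 := by
                intro v _; split <;> simp
              rw [Finset.sum_congr rfl h2, Finset.sum_ite_mem, Finset.univ_inter,
                uCut, ← Finset.smul_sum]
          _ = ∑ i ∈ t, w i • z i := by
              refine Finset.sum_congr rfl fun i hi => ?_
              rw [← hzS i hi]
          _ = x := by rw [← Finset.centerMass_eq_of_sum_1 _ _ hw1]; exact hcm
      rw [← hTy]
      exact key y h0 h1
    · refine Set.iUnion_subset fun σ => ?_
      refine convexHull_mono ?_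
      rintro _ ⟨k, rfl⟩
      refine ⟨(Finset.Iic k).image σ, ⟨σ 0, Finset.mem_image.mpr
        ⟨0, Finset.mem_Iic.mpr (Fin.zero_le k), rfl⟩⟩, ?_⟩
      rw [uCut, Finset.sum_image (fun a _ b _ h => σ.injective h)]
      rfl
  exact ⟨hmain, hmain ▸ convex_convexHull ℝ _⟩
end

section
/- Let Q be a connected Laplacian matrix on V = {0,…,n}. For every pair of distinct indices i, j ∈ V, the affine span of the set F_{i,j} = {u_S : ∅ ≠ S ⊊ V, i ∈ S, j ∉ S} is an affine subspace of dimension n − 1 (an affine hyperplane of H_0 = {x ∈ ℝ^{n+1} : Σ_i x_i = 0}). -/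
open Finset

lemma lap_ker (n : ℕ) (Q : Matrix (Fin (n+1)) (Fin (n+1)) ℤ)
    (hQ : IsConnectedLaplacian n Q) (x : Fin (n+1) → ℝ)
    (hx : ∀ p, ∑ q, (Q p q : ℝ) * x q = 0) (p q : Fin (n+1)) : x p = x q := by
  obtain ⟨⟨hsym, hneg, hrow⟩, hconn⟩ := hQ
  obtain ⟨p₀, -, hp₀⟩ := Finset.exists_max_image Finset.univ x ⟨0, Finset.mem_univ 0⟩
  set G := SimpleGraph.fromRel (fun i j => Q i j ≠ 0) with hG
  have step : ∀ a b, G.Adj a b → x a = x p₀ → x b = x p₀ := by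
    intro a b hab ha
    rw [hG, SimpleGraph.fromRel_adj] at hab
    obtain ⟨hne, hQab⟩ := hab
    have hQab : Q a b ≠ 0 := by
      rcases hQab with h | h
      · exact h
      · rw [hsym a b]; exact h
    have h2 : ∑ r, (Q a r : ℝ) = 0 := by exact_mod_cast hrow a
    have hsum : ∑ r, (Q a r : ℝ) * (x r - x p₀) = 0 := by
      have := hx a
      calc ∑ r, (Q a r : ℝ) * (x r - x p₀)
          = (∑ r, (Q a r : ℝ) * x r) - (∑ r, (Q a r : ℝ)) * x p₀ := by
            rw [Finset.sum_mul, ← Finset.sum_sub_distrib]; congr 1; ext r; ring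
        _ = 0 := by rw [this, h2]; ring
    have hnn : ∀ r ∈ Finset.univ, (0:ℝ) ≤ (Q a r : ℝ) * (x r - x p₀) := by
      intro r _
      rcases eq_or_ne r a with rfl | hra
      · rw [ha]; simp
      · have h1 : (Q a r : ℝ) ≤ 0 := by exact_mod_cast hneg a r (Ne.symm hra)
        have h2 : x r - x p₀ ≤ 0 := by have := hp₀ r (Finset.mem_univ r); linarith
        nlinarith [mul_nonneg (neg_nonneg.2 h1) (neg_nonneg.2 h2)]
    have hz := (Finset.sum_eq_zero_iff_of_nonneg hnn).1 hsum b (Finset.mem_univ b)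
    have hQab' : (Q a b : ℝ) ≠ 0 := by exact_mod_cast hQab
    have := mul_eq_zero.1 hz
    rcases this with h | h
    · exact absurd h hQab'
    · linarith
  have walkstep : ∀ u v : Fin (n+1), ∀ w : G.Walk u v, x u = x p₀ → x v = x p₀ := by
    intro u v w
    induction w with
    | nil => exact id
    | cons h _ ih => exact fun hu => ih (step _ _ h hu)
  have hall : ∀ v, x v = x p₀ := by
    intro v
    obtain ⟨w⟩ := hconn.preconnected p₀ v
    exact walkstep _ _ w rfl
  rw [hall p, hall q]


lemma rows_li (n : ℕ) (Q : Matrix (Fin (n+1)) (Fin (n+1)) ℤ)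
    (hQ : IsConnectedLaplacian n Q) (i j : Fin (n+1)) (hij : i ≠ j) :
    LinearIndependent ℝ
      (fun k : ((Finset.univ \ {i, j} : Finset (Fin (n+1))) : Finset (Fin (n+1))) =>
        rowVec n Q k) := by
  classical
  rw [Fintype.linearIndependent_iff]
  intro c hc k
  have hxsum : ∑ m, (if h : m ∈ (Finset.univ \ ({i,j} : Finset (Fin (n+1)))) then c ⟨m, h⟩ else 0) • rowVec n Q m = 0 := by
    rw [← Finset.sum_subset (Finset.subset_univ (Finset.univ \ ({i,j} : Finset (Fin (n+1)))))]
    · rw [← hc, ← Finset.sum_coe_sort (Finset.univ \ ({i,j} : Finset (Fin (n+1))))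
        (fun m => (if h : m ∈ (Finset.univ \ ({i,j} : Finset (Fin (n+1)))) then c ⟨m, h⟩ else 0) • rowVec n Q m)]
      apply Finset.sum_congr rfl
      intro m _
      rw [dif_pos m.2]
    · intro m _ hm
      rw [dif_neg hm, zero_smul]
  have hxlin : ∀ p, ∑ m, (Q p m : ℝ) *
      (if h : m ∈ (Finset.univ \ ({i,j} : Finset (Fin (n+1)))) then c ⟨m, h⟩ else 0) = 0 := by
    intro p
    have h2 := congrFun hxsum p
    rw [Finset.sum_apply, Pi.zero_apply] at h2
    refine Eq.trans ?_ h2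
    apply Finset.sum_congr rfl
    intro m _
    rw [Pi.smul_apply, smul_eq_mul, mul_comm]
    simp only [rowVec]
    rw [hQ.1.1 p m]
  have hconst := lap_ker n Q hQ _ hxlin
  have hxi : (if h : i ∈ (Finset.univ \ ({i,j} : Finset (Fin (n+1)))) then c ⟨i, h⟩ else 0) = 0 := by
    rw [dif_neg]; simp
  have hk := hconst k i
  rw [hxi, dif_pos k.2] at hk
  exact hk

/-- for distinct `i, j`, the affine span of
`F_{i,j} = {u_S : ∅ ≠ S ⊊ V, i ∈ S, j ∉ S}` has dimension `n - 1`. -/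
theorem affine_span_cut_face (n : ℕ) (hn : 1 ≤ n)
    (Q : Matrix (Fin (n+1)) (Fin (n+1)) ℤ) (hQ : IsConnectedLaplacian n Q)
    (i j : Fin (n+1)) (hij : i ≠ j) :
    Module.finrank ℝ (affineSpan ℝ
        {x | ∃ S : Finset (Fin (n+1)), S.Nonempty ∧ S ≠ Finset.univ ∧
          i ∈ S ∧ j ∉ S ∧ x = uCut n Q S}).direction = n - 1 := by
  classical
  have hF0 : uCut n Q {i} ∈ {x | ∃ S : Finset (Fin (n+1)), S.Nonempty ∧ S ≠ Finset.univ ∧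
      i ∈ S ∧ j ∉ S ∧ x = uCut n Q S} := by
    refine ⟨{i}, Finset.singleton_nonempty i, ?_, Finset.mem_singleton_self i, ?_, rfl⟩
    · intro h
      have : j ∈ ({i} : Finset (Fin (n+1))) := h ▸ Finset.mem_univ j
      exact hij (Finset.mem_singleton.1 this).symm
    · simp [Ne.symm hij]
  have hdir : (affineSpan ℝ {x | ∃ S : Finset (Fin (n+1)), S.Nonempty ∧ S ≠ Finset.univ ∧
      i ∈ S ∧ j ∉ S ∧ x = uCut n Q S}).direction =
      Submodule.span ℝ (Set.range
        (fun k : ((Finset.univ \ {i, j} : Finset (Fin (n+1))) : Finset (Fin (n+1))) =>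
          rowVec n Q k)) := by
    rw [direction_affineSpan]
    apply le_antisymm
    · rw [vectorSpan_eq_span_vsub_set_right ℝ hF0, Submodule.span_le]
      rintro _ ⟨y, ⟨S, hS1, hS2, hiS, hjS, rfl⟩, rfl⟩
      have heq : uCut n Q S -ᵥ uCut n Q {i} = ∑ k ∈ S.erase i, rowVec n Q k := by
        simp only [vsub_eq_sub, uCut, Finset.sum_singleton]
        rw [← Finset.add_sum_erase S _ hiS]
        abel
      show uCut n Q S -ᵥ uCut n Q {i} ∈ _
      rw [heq]
      apply Submodule.sum_mem
      intro k hk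
      apply Submodule.subset_span
      have hki : k ≠ i := (Finset.mem_erase.1 hk).1
      have hkS : k ∈ S := (Finset.mem_erase.1 hk).2
      have hkj : k ≠ j := fun h => hjS (h ▸ hkS)
      exact ⟨⟨k, by simp [hki, hkj]⟩, rfl⟩
    · rw [Submodule.span_le]
      rintro _ ⟨k, rfl⟩
      have hk := k.2
      simp only [Finset.mem_sdiff, Finset.mem_univ, true_and, Finset.mem_insert,
        Finset.mem_singleton, not_or] at hk
      obtain ⟨hki, hkj⟩ := hk
      have h1 : uCut n Q {i, (k : Fin (n+1))} ∈ {x | ∃ S : Finset (Fin (n+1)), S.Nonempty ∧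
          S ≠ Finset.univ ∧ i ∈ S ∧ j ∉ S ∧ x = uCut n Q S} := by
        refine ⟨{i, (k : Fin (n+1))}, ⟨i, Finset.mem_insert_self _ _⟩, ?_,
          Finset.mem_insert_self _ _, ?_, rfl⟩
        · intro h
          have : j ∈ ({i, (k : Fin (n+1))} : Finset (Fin (n+1))) := by
            rw [h]; exact Finset.mem_univ j
          rcases Finset.mem_insert.1 this with h' | h'
          · exact hij h'.symm
          · exact hkj (Finset.mem_singleton.1 h').symm
        · intro h
          rcases Finset.mem_insert.1 h with h' | h'
          · exact hij h'.symm
          · exact hkj (Finset.mem_singleton.1 h').symm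
      have hmem := vsub_mem_vectorSpan ℝ h1 hF0
      have heq : uCut n Q {i, (k : Fin (n+1))} -ᵥ uCut n Q {i} = rowVec n Q k := by
        simp only [vsub_eq_sub, uCut, Finset.sum_singleton]
        rw [Finset.sum_insert (by simp [Ne.symm hki]), Finset.sum_singleton]
        abel
      rwa [heq] at hmem
  rw [hdir, finrank_span_eq_card (rows_li n Q hQ i j hij), Fintype.card_coe,
    Finset.card_sdiff_of_subset (Finset.subset_univ _), Finset.card_univ, Fintype.card_fin,
    Finset.card_pair hij]
  omega
end

section
/- Let Q be a connected Laplacian matrix on V = {0,…,n}. For every permutation σ of V and every integer k with 0 ≤ k ≤ n − 2, there exists a linear functional f on ℝ^{n+1} whose maximum over the Delaunay polytope H_{Del_G}(O) is attained exactly at the points of the segment with endpoints u^σ_k and u^σ_{k+1}; that is, each segment [u^σ_k, u^σ_{k+1}] (0 ≤ k ≤ n−2) is an exposed edge of H_{Del_G}(O). -/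
open Finset

/-! Write `A = σ {0, …, k}` and `B = σ {0, …, k + 1}`. A connected Laplacian has kernel spanned by
the all-ones vector, so the only linear relation among the rows `b_i` is `∑ b_i = 0`, and a linear
functional `f` may prescribe any values `f b_i = c_i` with `∑ c_i = 0`. Take `c` positive on `A`,
zero on `B \ A` and negative off `B`. Then `f u_S = ∑_{i ∈ S} c_i` is maximal exactly when
`A ⊆ S ⊆ B`, i.e. at `u^σ_k` and `u^σ_{k+1}`; on every simplex `△_τ` the maximum of `f` is attained
on the face spanned by those vertices, which lie among these two points. -/

section Sums

variable {α : Type*} [DecidableEq α] {c : α → ℝ} {A B : Finset α}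

theorem sum_le_sum_of_nonneg_of_nonpos (hA : ∀ s ∈ A, 0 ≤ c s) (hAc : ∀ s ∉ A, c s ≤ 0)
    (S : Finset α) : ∑ s ∈ S, c s ≤ ∑ s ∈ A, c s := by
  have h₁ : 0 ≤ ∑ s ∈ A \ S, c s := sum_nonneg fun s hs => hA s (mem_sdiff.1 hs).1
  have h₂ : ∑ s ∈ S \ A, c s ≤ 0 := sum_nonpos fun s hs => hAc s (mem_sdiff.1 hs).2
  linarith [sum_sdiff_sub_sum_sdiff (s₁ := S) (s₂ := A) (f := c)]

theorem subset_and_subset_of_sum_eq (hA : ∀ s ∈ A, 0 < c s) (hAc : ∀ s ∉ A, c s ≤ 0)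
    (hB : ∀ s ∉ B, c s < 0) {S : Finset α} (h : ∑ s ∈ S, c s = ∑ s ∈ A, c s) :
    A ⊆ S ∧ S ⊆ B := by
  have h₁ : 0 ≤ ∑ s ∈ A \ S, c s := sum_nonneg fun s hs => (hA s (mem_sdiff.1 hs).1).le
  have h₂ : ∑ s ∈ S \ A, c s ≤ 0 := sum_nonpos fun s hs => hAc s (mem_sdiff.1 hs).2
  have h₃ := sum_sdiff_sub_sum_sdiff (s₁ := S) (s₂ := A) (f := c)
  constructor
  · intro s hsA
    by_contra hsS
    have := (sum_eq_zero_iff_of_nonneg fun t ht => (hA t (mem_sdiff.1 ht).1).le).1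
      (by linarith) s (mem_sdiff.2 ⟨hsA, hsS⟩)
    linarith [hA s hsA]
  · intro s hsS
    by_contra hsB
    have hsA : s ∉ A := fun hsA => (hB s hsB).not_ge (hA s hsA).le
    have := (sum_eq_zero_iff_of_nonpos fun t ht => hAc t (mem_sdiff.1 ht).2).1
      (by linarith) s (mem_sdiff.2 ⟨hsS, hsA⟩)
    linarith [hB s hsB]

end Sums

theorem Finset.eq_or_eq_of_subset_of_subset {α : Type*} {A S B : Finset α} (hAS : A ⊆ S)
    (hSB : S ⊆ B) (hcard : #B ≤ #A + 1) : S = A ∨ S = B := by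
  rcases le_or_gt #S #A with h | h
  · exact Or.inl (eq_of_subset_of_card_le hAS h).symm
  · exact Or.inr (eq_of_subset_of_card_le hSB (by omega))

theorem exists_sum_eq_zero_pos_on_neg_off {α : Type*} [Fintype α] [DecidableEq α]
    {A B : Finset α} (hA : A.Nonempty) (hB : Bᶜ.Nonempty) (hAB : A ⊆ B) :
    ∃ c : α → ℝ, ∑ s, c s = 0 ∧ (∀ s ∈ A, 0 < c s) ∧ (∀ s ∈ B \ A, c s = 0) ∧
      ∀ s ∉ B, c s < 0 := by
  have hAs : ∀ s ∈ A, s ∉ Bᶜ := fun s hs => by simpa using hAB hs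
  refine ⟨fun s => (if s ∈ A then (#Bᶜ : ℝ) else 0) - if s ∈ Bᶜ then (#A : ℝ) else 0,
    ?_, fun s hs => ?_, fun s hs => ?_, fun s hs => ?_⟩
  · simp only [sum_sub_distrib, sum_ite_mem, univ_inter, sum_const, nsmul_eq_mul]
    ring
  · simp [hs, hAs s hs, hB.card_pos]
  · simp [(mem_sdiff.1 hs).1, (mem_sdiff.1 hs).2]
  · have : s ∉ A := fun h => hs (hAB h)
    simp [hs, this, hA.card_pos]

theorem exists_linearMap_apply_eq {K V ι : Type*} [Field K] [AddCommGroup V] [Module K V]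
    [Fintype ι] [DecidableEq ι] (v : ι → V) (c : ι → K)
    (h : ∀ l : ι → K, ∑ i, l i • v i = 0 → ∑ i, l i * c i = 0) :
    ∃ f : V →ₗ[K] K, ∀ i, f (v i) = c i := by
  set B := Fintype.linearCombination K v
  have hφ : Fintype.linearCombination K c ∈ (LinearMap.ker B).dualAnnihilator := by
    rw [Submodule.mem_dualAnnihilator]
    intro l hl
    simpa [B, Fintype.linearCombination_apply] using
      h l (by simpa [B, Fintype.linearCombination_apply] using hl)
  rw [← LinearMap.range_dualMap_eq_dualAnnihilator_ker] at hφ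
  obtain ⟨f, hf⟩ := hφ
  refine ⟨f, fun i => ?_⟩
  simpa [B] using LinearMap.congr_fun hf (Pi.single i 1)

section Convex

variable {𝕜 E : Type*} [Field 𝕜] [LinearOrder 𝕜] [IsStrictOrderedRing 𝕜]
  [AddCommGroup E] [Module 𝕜 E]

theorem mem_convexHull_setOf_eq_of_le {s : Set E} {f : E →ₗ[𝕜] 𝕜} {M : 𝕜}
    (hs : ∀ y ∈ s, f y ≤ M) {x : E} (hx : x ∈ convexHull 𝕜 s) (hfx : M ≤ f x) :
    x ∈ convexHull 𝕜 {y ∈ s | f y = M} := by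
  have hlt : convexHull 𝕜 {y ∈ s | f y < M} ⊆ {y | f y < M} :=
    convexHull_min (fun y hy => hy.2) (convex_halfSpace_lt f.isLinear M)
  have heq : convexHull 𝕜 {y ∈ s | f y = M} ⊆ {y | f y = M} :=
    convexHull_min (fun y hy => hy.2) (convex_hyperplane f.isLinear M)
  have hsplit : s = {y ∈ s | f y = M} ∪ {y ∈ s | f y < M} := by
    ext y
    constructor
    · intro hy
      rcases (hs y hy).eq_or_lt with h | h
      exacts [Or.inl ⟨hy, h⟩, Or.inr ⟨hy, h⟩]
    · rintro (h | h) <;> exact h.1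
  rcases Set.eq_empty_or_nonempty {y ∈ s | f y < M} with hempty | hne_lt
  · rwa [hsplit, hempty, Set.union_empty] at hx
  rcases Set.eq_empty_or_nonempty {y ∈ s | f y = M} with hempty | hne_eq
  · rw [hsplit, hempty, Set.empty_union] at hx
    exact absurd hfx (hlt hx).not_ge
  rw [hsplit, convexHull_union hne_eq hne_lt, mem_convexJoin] at hx
  obtain ⟨a, ha, b, hb, α, β, hα, hβ, hαβ, rfl⟩ := hx
  have hfa : f a = M := heq ha
  have hfb : f b < M := hlt hb
  obtain rfl : α = 1 - β := eq_sub_of_add_eq hαβ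
  have hβ0 : β = 0 := by
    by_contra hβ0
    have := mul_pos (hβ.lt_of_ne' hβ0) (sub_pos.2 hfb)
    simp only [map_add, map_smul, smul_eq_mul, hfa] at hfx
    linarith
  simpa [hβ0] using ha

theorem setOf_isMax_iUnion_convexHull_eq_segment {ι : Type*} {s : ι → Set E}
    {f : E →ₗ[𝕜] 𝕜} {M : 𝕜} {a b : E} {i₀ : ι} (hle : ∀ i, ∀ y ∈ s i, f y ≤ M)
    (hmax : ∀ i, ∀ y ∈ s i, f y = M → y = a ∨ y = b)
    (ha : a ∈ s i₀) (hb : b ∈ s i₀) (hfa : f a = M) (hfb : f b = M) :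
    {x | x ∈ ⋃ i, convexHull 𝕜 (s i) ∧ ∀ y ∈ ⋃ i, convexHull 𝕜 (s i), f y ≤ f x} =
      segment 𝕜 a b := by
  have hK : ∀ y ∈ ⋃ i, convexHull 𝕜 (s i), f y ≤ M := by
    intro y hy
    obtain ⟨i, hi⟩ := Set.mem_iUnion.1 hy
    exact convexHull_min (hle i) (convex_halfSpace_le f.isLinear M) hi
  ext x
  constructor
  · rintro ⟨hx, hxmax⟩
    obtain ⟨i, hi⟩ := Set.mem_iUnion.1 hx
    have hface := mem_convexHull_setOf_eq_of_le (hle i) hi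
      (hfa ▸ hxmax a (Set.mem_iUnion.2 ⟨i₀, subset_convexHull 𝕜 _ ha⟩))
    rw [← convexHull_pair]
    exact convexHull_mono (fun y hy => hmax i y hy.1 hy.2) hface
  · intro hx
    have hfx : f x = M := (convex_hyperplane f.isLinear M).segment_subset hfa hfb hx
    exact ⟨Set.mem_iUnion.2 ⟨i₀, segment_subset_convexHull ha hb hx⟩,
      fun y hy => hfx ▸ hK y hy⟩

end Convex

theorem IsLaplacian.apply_eq_of_isMax {n : ℕ} {Q : Matrix (Fin (n+1)) (Fin (n+1)) ℤ}
    (hQ : IsLaplacian n Q) {w : Fin (n+1) → ℝ}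
    (hw : (Q.map (Int.cast : ℤ → ℝ)).mulVec w = 0)
    {i j : Fin (n+1)} (hmax : ∀ t, w t ≤ w i) (hij : Q i j ≠ 0) : w j = w i := by
  have hrow : ∑ t, (Q i t : ℝ) = 0 := by exact_mod_cast hQ.2.2 i
  have hsum : ∑ t, (Q i t : ℝ) * (w t - w i) = 0 := by
    simpa [mul_sub, sum_sub_distrib, ← sum_mul, hrow, Matrix.mulVec, dotProduct]
      using congrFun hw i
  have hnonneg : ∀ t ∈ univ, 0 ≤ (Q i t : ℝ) * (w t - w i) := by
    intro t _
    rcases eq_or_ne i t with rfl | hit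
    · simp
    · exact mul_nonneg_of_nonpos_of_nonpos (by exact_mod_cast hQ.2.1 i t hit)
        (sub_nonpos.2 (hmax t))
  have := (sum_eq_zero_iff_of_nonneg hnonneg).1 hsum j (mem_univ j)
  have hij' : (Q i j : ℝ) ≠ 0 := by exact_mod_cast hij
  linarith [(mul_eq_zero.1 this).resolve_left hij']

theorem IsConnectedLaplacian.eq_of_mulVec_eq_zero {n : ℕ}
    {Q : Matrix (Fin (n+1)) (Fin (n+1)) ℤ}
    (hQ : IsConnectedLaplacian n Q) {w : Fin (n+1) → ℝ}
    (hw : (Q.map (Int.cast : ℤ → ℝ)).mulVec w = 0) (i j : Fin (n+1)) : w i = w j := by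
  obtain ⟨i₀, -, hi₀⟩ := exists_max_image univ w univ_nonempty
  suffices h : ∀ j, w j = w i₀ by rw [h i, h j]
  intro j
  induction (SimpleGraph.reachable_iff_reflTransGen i₀ j).1 (hQ.2.preconnected i₀ j) with
  | refl => rfl
  | @tail a b _ hab ih =>
    have hQab : Q a b ≠ 0 := by
      rcases (SimpleGraph.fromRel_adj _ a b).1 hab with ⟨-, h | h⟩
      · exact h
      · rwa [hQ.1.1]
    rw [← ih]
    exact hQ.1.apply_eq_of_isMax hw (fun t => ih ▸ hi₀ t (mem_univ t)) hQab

theorem IsConnectedLaplacian.exists_linearMap_apply_rowVec {n : ℕ}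
    {Q : Matrix (Fin (n+1)) (Fin (n+1)) ℤ} (hQ : IsConnectedLaplacian n Q) (c : Fin (n+1) → ℝ)
    (hc : ∑ i, c i = 0) : ∃ f : (Fin (n+1) → ℝ) →ₗ[ℝ] ℝ, ∀ i, f (rowVec n Q i) = c i := by
  refine exists_linearMap_apply_eq _ c fun l hl => ?_
  have hw : (Q.map (Int.cast : ℤ → ℝ)).mulVec l = 0 := by
    ext j
    simpa [rowVec, Matrix.mulVec, dotProduct, hQ.1.1 j, mul_comm] using congrFun hl j
  have hconst : l = fun _ => l 0 := funext fun i => hQ.eq_of_mulVec_eq_zero hw i 0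
  rw [hconst, ← mul_sum, hc, mul_zero]

theorem uPerm_eq_uCut (n : ℕ) (Q : Matrix (Fin (n+1)) (Fin (n+1)) ℤ)
    (τ : Equiv.Perm (Fin (n+1))) (j : Fin (n+1)) :
    uPerm n Q τ j = uCut n Q ((Iic j).map τ.toEmbedding) := by
  simp [uPerm, uCut, sum_map]

/-- for every permutation `σ` and every `0 ≤ k ≤ n - 2`, the
segment `[u^σ_k, u^σ_{k+1}]` is an exposed edge of the Delaunay polytope: some
linear functional attains its maximum over `H_{Del_G}(O)` exactly there. -/
theorem segment_is_exposed_edge (n : ℕ)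
    (Q : Matrix (Fin (n+1)) (Fin (n+1)) ℤ) (hQ : IsConnectedLaplacian n Q)
    (σ : Equiv.Perm (Fin (n+1))) (k : ℕ) (hk : k + 2 ≤ n) :
    ∃ f : (Fin (n+1) → ℝ) →ₗ[ℝ] ℝ,
      {x | x ∈ HDel n Q ∧ ∀ y ∈ HDel n Q, f y ≤ f x} =
        segment ℝ (uPerm n Q σ ⟨k, by omega⟩) (uPerm n Q σ ⟨k + 1, by omega⟩) := by
  classical
  set A := (Iic (⟨k, by omega⟩ : Fin (n+1))).map σ.toEmbedding
  set B := (Iic (⟨k + 1, by omega⟩ : Fin (n+1))).map σ.toEmbedding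
  have hAB : A ⊆ B := map_subset_map.2 (Iic_subset_Iic.2 (Fin.mk_le_mk.2 k.le_succ))
  have hcardB : #B = #A + 1 := by simp [A, B]
  have hBc : Bᶜ.Nonempty := card_pos.1 (by rw [card_compl]; simp [B]; omega)
  obtain ⟨c, hc, hpos, hzero, hneg⟩ :=
    exists_sum_eq_zero_pos_on_neg_off (by simp [A]) hBc hAB
  have hnonpos : ∀ s ∉ A, c s ≤ 0 := fun s hs =>
    if h : s ∈ B then (hzero s (mem_sdiff.2 ⟨h, hs⟩)).le else (hneg s h).le
  obtain ⟨f, hf⟩ := hQ.exists_linearMap_apply_rowVec c hc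
  have hfu : ∀ τ j, f (uPerm n Q τ j) = ∑ s ∈ (Iic j).map τ.toEmbedding, c s := fun τ j => by
    simp only [uPerm_eq_uCut, uCut, map_sum, hf]
  refine ⟨f, setOf_isMax_iUnion_convexHull_eq_segment (M := ∑ s ∈ A, c s)
    ?_ ?_ (Set.mem_range_self _) (Set.mem_range_self _) (hfu σ _) ?_⟩
  · rintro τ _ ⟨j, rfl⟩
    rw [hfu]
    exact sum_le_sum_of_nonneg_of_nonpos (fun s hs => (hpos s hs).le) hnonpos _
  · rintro τ _ ⟨j, rfl⟩ hmax
    rw [hfu] at hmax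
    obtain ⟨hAS, hSB⟩ := subset_and_subset_of_sum_eq hpos hnonpos hneg hmax
    rcases eq_or_eq_of_subset_of_subset hAS hSB hcardB.le with h | h
    · exact Or.inl (by rw [uPerm_eq_uCut, h, uPerm_eq_uCut])
    · exact Or.inr (by rw [uPerm_eq_uCut, h, uPerm_eq_uCut])
  · rw [hfu]
    exact (sum_subset hAB fun s hsB hsA => hzero s (mem_sdiff.2 ⟨hsB, hsA⟩)).symm
end
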